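/- arXiv:2208.02158 — 2 statements merged into one kernel-verified Lean document; each statement's English description precedes it below -/
import Mathlib

section
/- Let B be the subgroup of GL(4,ℂ) consisting of invertible matrices g such that conjugation by g preserves the subspace 𝔟 (i.e., g𝔟g⁻¹ ⊆ 𝔟). Then the intersection S ∩ B equals the set of diagonal matrices diag(x, y, x⁻¹, y⁻¹) with x, y ∈ U(1). -/
noncomputable section

open Matrix

abbrev M4 : Type := Matrix (Fin 4) (Fin 4) ℂ
abbrev M2 : Type := Matrix (Fin 2) (Fin 2) ℂ

/-- Parametrization of the Lie algebra 𝔟. -/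
def bMat (z₁ z₂ w₁ w₂ w₃ w₄ : ℂ) : M4 :=
  !![z₁, 0, 0, 0; w₁, z₂, 0, 0; w₂, w₃, -z₁, -w₁; w₃, w₄, 0, -z₂]

def bSet : Set M4 := {M | ∃ z₁ z₂ w₁ w₂ w₃ w₄ : ℂ, M = bMat z₁ z₂ w₁ w₂ w₃ w₄}

/-- Parametrization of the Lie algebra 𝔮. -/
def qMat (z₁ z₂ z₃ z₄ w₁ w₂ w₃ : ℂ) : M4 :=
  !![z₁, 0, 0, 0; w₁, z₂, 0, z₃; w₂, w₃, -z₁, -w₁; w₃, z₄, 0, -z₂]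

def qSet : Set M4 := {M | ∃ z₁ z₂ z₃ z₄ w₁ w₂ w₃ : ℂ, M = qMat z₁ z₂ z₃ z₄ w₁ w₂ w₃}

/-- The standard symplectic form matrix. -/
def Jmat : M4 := !![0, 0, 1, 0; 0, 0, 0, 1; -1, 0, 0, 0; 0, -1, 0, 0]

/-- The signature matrix defining Sp(1,1). -/
def Kmat : M4 := Matrix.diagonal ![1, -1, 1, -1]

def J2 : M2 := !![0, 1; -1, 0]

/-- The group Sp(1): 2×2 unitary symplectic complex matrices. -/
def Sp1 : Set M2 := {Y | Yᴴ * Y = 1 ∧ Yᵀ * J2 * Y = J2}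

/-- Parametrization of elements of the group S. -/
def sMat (x y₁ y₂ y₃ y₄ : ℂ) : M4 :=
  !![x, 0, 0, 0; 0, y₁, 0, y₂; 0, 0, x⁻¹, 0; 0, y₃, 0, y₄]

def sSet : Set M4 :=
  {g | ∃ (x : ℂ) (Y : M2), ‖x‖ = 1 ∧ Y ∈ Sp1 ∧
    g = sMat x (Y 0 0) (Y 0 1) (Y 1 0) (Y 1 1)}

/-- The Lie algebra sp(2,ℂ). -/
def sp2Set : Set M4 := {M | Mᵀ * Jmat + Jmat * M = 0}

/-- The group Sp(1,1). -/
def Sp11Set : Set M4 := {g | gᵀ * Jmat * g = Jmat ∧ gᴴ * Kmat * g = Kmat}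

/-- The Lie algebra sp(1,1). -/
def sp11Set : Set M4 := {M | Mᵀ * Jmat + Jmat * M = 0 ∧ Mᴴ * Kmat + Kmat * M = 0}

/-- The nilpotent part 𝔫 of 𝔟. -/
def nMat (w₁ w₂ w₃ w₄ : ℂ) : M4 := bMat 0 0 w₁ w₂ w₃ w₄

def nSet : Set M4 := {M | ∃ w₁ w₂ w₃ w₄ : ℂ, M = nMat w₁ w₂ w₃ w₄}

/-- The diagonal (Cartan) part 𝔥 of 𝔟. -/
def hSet : Set M4 := {M | ∃ z₁ z₂ : ℂ, M = Matrix.diagonal ![z₁, z₂, -z₁, -z₂]}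


theorem S_inter_B :
    {g : M4 | g ∈ sSet ∧ IsUnit g ∧ ∀ M ∈ bSet, g * M * g⁻¹ ∈ bSet}
      = {g : M4 | ∃ x y : ℂ, ‖x‖ = 1 ∧ ‖y‖ = 1 ∧
          g = Matrix.diagonal ![x, y, x⁻¹, y⁻¹]} := by
  ext g
  simp only [Set.mem_setOf_eq]
  constructor
  · rintro ⟨⟨x, Y, hx, ⟨hU, hSp⟩, rfl⟩, hunit, hB⟩
    have hPmem : bMat 0 0 0 0 0 1 ∈ bSet := ⟨0, 0, 0, 0, 0, 1, rfl⟩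
    obtain ⟨a₁, a₂, b₁, b₂, b₃, b₄, hN⟩ := hB _ hPmem
    set s := sMat x (Y 0 0) (Y 0 1) (Y 1 0) (Y 1 1) with hs
    have hinv : s⁻¹ * s = 1 :=
      Matrix.nonsing_inv_mul _ ((Matrix.isUnit_iff_isUnit_det _).mp hunit)
    have hEq : s * bMat 0 0 0 0 0 1 = bMat a₁ a₂ b₁ b₂ b₃ b₄ * s := by
      calc s * bMat 0 0 0 0 0 1
          = s * bMat 0 0 0 0 0 1 * (s⁻¹ * s) := by rw [hinv, mul_one]
        _ = (s * bMat 0 0 0 0 0 1 * s⁻¹) * s := by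
            rw [← mul_assoc]
        _ = bMat a₁ a₂ b₁ b₂ b₃ b₄ * s := by rw [hN]
    rw [hs] at hEq
    have e11 := congrFun (congrFun hEq 1) 1
    have e13 := congrFun (congrFun hEq 1) 3
    simp [sMat, bMat, Matrix.mul_apply, Fin.sum_univ_four] at e11 e13
    have hy2 : Y 0 1 = 0 := by
      rcases e13 with h | h
      · rw [e11, h, zero_mul]
      · exact h
    have u00 := congrFun (congrFun hU 0) 0
    have u01 := congrFun (congrFun hU 0) 1
    have u11 := congrFun (congrFun hU 1) 1
    simp [Matrix.mul_apply, Matrix.conjTranspose_apply, Fin.sum_univ_two,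
      Matrix.one_apply, hy2] at u00 u01 u11
    have hy4ne : Y 1 1 ≠ 0 := by
      intro h; rw [h] at u11; simp at u11
    have hy3 : Y 1 0 = 0 := by
      rcases u01 with h | h
      · exact h
      · exact absurd h hy4ne
    have s01 := congrFun (congrFun hSp 0) 1
    simp [Matrix.mul_apply, Matrix.transpose_apply, J2, Fin.sum_univ_two,
      hy2, hy3] at s01
    rw [hy3] at u00
    simp at u00
    have hdet : Y 0 0 * Y 1 1 = 1 := by linear_combination s01
    have hy1ne : Y 0 0 ≠ 0 := by
      intro h; rw [h, zero_mul] at hdet; exact zero_ne_one hdet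
    have hy1 : ‖Y 0 0‖ = 1 := by
      have hn : Complex.normSq (Y 0 0) = 1 := by
        have := u00
        rw [← Complex.normSq_eq_conj_mul_self] at this
        exact_mod_cast this
      have h := Complex.sq_norm (Y 0 0)
      nlinarith [norm_nonneg (Y 0 0)]
    refine ⟨x, Y 0 0, hx, hy1, ?_⟩
    have hy4 : Y 1 1 = (Y 0 0)⁻¹ := by
      field_simp
      linear_combination hdet
    ext i j
    fin_cases i <;> fin_cases j <;>
      simp [hs, sMat, Matrix.diagonal_apply, hy2, hy3, hy4, Matrix.vecHead, Matrix.vecTail]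
  · rintro ⟨x, y, hx, hy, rfl⟩
    have hx0 : x ≠ 0 := fun h => by simp [h] at hx
    have hy0 : y ≠ 0 := fun h => by simp [h] at hy
    have hyc : (starRingEnd ℂ) y = y⁻¹ := by
      have h1 : (starRingEnd ℂ) y * y = 1 := by
        rw [← Complex.normSq_eq_conj_mul_self]
        exact_mod_cast (by rw [← Complex.sq_norm, hy]; norm_num :
          Complex.normSq y = 1)
      exact eq_inv_of_mul_eq_one_left h1
    refine ⟨⟨x, !![y, 0; 0, y⁻¹], hx, ⟨?_, ?_⟩, ?_⟩, ?_, ?_⟩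
    · have hct : (!![y, 0; 0, y⁻¹])ᴴ = !![y⁻¹, 0; 0, y] := by
        ext i j
        fin_cases i <;> fin_cases j <;>
          simp [Matrix.conjTranspose_apply, hyc, map_inv₀]
      rw [hct]
      ext i j
      fin_cases i <;> fin_cases j <;>
        simp [Matrix.mul_apply, Fin.sum_univ_two, Matrix.one_apply,
          inv_mul_cancel₀ hy0, mul_inv_cancel₀ hy0]
    · have htr : (!![y, 0; 0, y⁻¹])ᵀ = !![y, 0; 0, y⁻¹] := by
        ext i j
        fin_cases i <;> fin_cases j <;> simp [Matrix.transpose_apply]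
      rw [htr]
      ext i j
      fin_cases i <;> fin_cases j <;>
        simp [Matrix.mul_apply, Fin.sum_univ_two, J2,
          inv_mul_cancel₀ hy0, mul_inv_cancel₀ hy0]
    · ext i j
      fin_cases i <;> fin_cases j <;> simp [sMat, Matrix.diagonal_apply, Matrix.vecHead, Matrix.vecTail]
    · rw [Matrix.isUnit_iff_isUnit_det, Matrix.det_diagonal, isUnit_iff_ne_zero]
      rw [Fin.prod_univ_four]
      simp only [Matrix.cons_val_zero, Matrix.cons_val_one, Matrix.head_cons,
        Matrix.cons_val_two, Matrix.tail_cons, Matrix.cons_val_three]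
      exact mul_ne_zero (mul_ne_zero (mul_ne_zero hx0 hy0) (inv_ne_zero hx0))
        (inv_ne_zero hy0)
    · rintro M ⟨z₁, z₂, w₁, w₂, w₃, w₄, rfl⟩
      have hginv : (Matrix.diagonal ![x, y, x⁻¹, y⁻¹])⁻¹
          = Matrix.diagonal ![x⁻¹, y⁻¹, x, y] := by
        apply Matrix.inv_eq_right_inv
        rw [Matrix.diagonal_mul_diagonal]
        ext i j
        fin_cases i <;> fin_cases j <;>
          simp [Matrix.diagonal_apply, Matrix.one_apply, Matrix.vecHead,
            Matrix.vecTail, mul_inv_cancel₀ hx0, mul_inv_cancel₀ hy0,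
            inv_mul_cancel₀ hx0, inv_mul_cancel₀ hy0]
      rw [hginv]
      refine ⟨z₁, z₂, y * w₁ * x⁻¹, x⁻¹ * w₂ * x⁻¹, x⁻¹ * w₃ * y⁻¹,
        y⁻¹ * w₄ * y⁻¹, ?_⟩
      ext i j
      fin_cases i <;> fin_cases j <;>
        simp [bMat, Matrix.mul_apply, Matrix.diagonal_apply, Fin.sum_univ_four,
          Matrix.vecHead, Matrix.vecTail] <;>
        (first | ring1 | field_simp)
end
end

section
/- The intersection of Sp(1,1) with the set of matrices g normalizing 𝔟 (g𝔟g⁻¹ ⊆ 𝔟) equals the set of diagonal matrices diag(x, y, x̄, ȳ) with x, y ∈ U(1); in particular it coincides with S ∩ {g : g𝔟g⁻¹ ⊆ 𝔟}. -/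
noncomputable section

open Matrix

-- Auxiliary lemmas

private lemma aux_conj_mul (x : ℂ) (hx : ‖x‖ = 1) : x * (starRingEnd ℂ) x = 1 := by
  rw [Complex.mul_conj]
  norm_cast
  rw [Complex.normSq_eq_norm_sq, hx]; norm_num

private lemma aux_abs_one (x : ℂ) (h : (starRingEnd ℂ) x * x = 1) : ‖x‖ = 1 := by
  have h2 : Complex.normSq x = 1 := by
    have h3 := Complex.mul_conj x
    have h4 : ((Complex.normSq x : ℝ) : ℂ) = 1 := by rw [← h3]; linear_combination h
    exact_mod_cast h4
  have h5 : ‖x‖ ^ 2 = 1 := by rw [Complex.sq_norm, h2]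
  have h6 : (‖x‖ - 1) * (‖x‖ + 1) = 0 := by ring_nf; linarith [h5]
  rcases mul_eq_zero.mp h6 with h7 | h7
  · linarith
  · have := norm_nonneg x; linarith

set_option maxHeartbeats 2000000 in
private lemma aux_forward (g : M4) (hJ : gᵀ * Jmat * g = Jmat) (hK : gᴴ * Kmat * g = Kmat)
    (hN : ∀ M ∈ bSet, g * M * g⁻¹ ∈ bSet) :
    ∃ x y : ℂ, ‖x‖ = 1 ∧ ‖y‖ = 1 ∧
      g = Matrix.diagonal ![x, y, starRingEnd ℂ x, starRingEnd ℂ y] := by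
  have hB : (-Jmat) * gᵀ * Jmat = !![g 2 2, g 3 2, -(g 0 2), -(g 1 2);
      g 2 3, g 3 3, -(g 0 3), -(g 1 3);
      -(g 2 0), -(g 3 0), g 0 0, g 1 0;
      -(g 2 1), -(g 3 1), g 0 1, g 1 1] := by
    ext i j
    fin_cases i <;> fin_cases j <;>
      simp [Matrix.mul_apply, Matrix.vecMul, dotProduct, Fin.sum_univ_four, Jmat,
        Matrix.vecHead, Matrix.vecTail]
  have hone : (-Jmat) * Jmat = 1 := by
    ext i j
    fin_cases i <;> fin_cases j <;>
      simp [Matrix.mul_apply, Fin.sum_univ_four, Jmat, Matrix.one_apply, Matrix.vecHead,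
        Matrix.vecTail]
  have hinv : g⁻¹ = !![g 2 2, g 3 2, -(g 0 2), -(g 1 2);
      g 2 3, g 3 3, -(g 0 3), -(g 1 3);
      -(g 2 0), -(g 3 0), g 0 0, g 1 0;
      -(g 2 1), -(g 3 1), g 0 1, g 1 1] := by
    apply Matrix.inv_eq_left_inv
    rw [← hB, Matrix.mul_assoc, Matrix.mul_assoc, ← Matrix.mul_assoc gᵀ, hJ, hone]
  -- entrywise equations from hJ, hK
  have eJ : ∀ i j, (gᵀ * Jmat * g) i j = Jmat i j := fun i j => by rw [hJ]
  have eK : ∀ i j, (gᴴ * Kmat * g) i j = Kmat i j := fun i j => by rw [hK]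
  have eJ02 := eJ 0 2; have eJ03 := eJ 0 3; have eJ12 := eJ 1 2; have eJ13 := eJ 1 3
  have eK00 := eK 0 0; have eK11 := eK 1 1; have eK22 := eK 2 2
  have eK02 := eK 0 2; have eK12 := eK 1 2; have eK03 := eK 0 3
  have eK13 := eK 1 3; have eK23 := eK 2 3
  simp only [Matrix.mul_apply, Fin.sum_univ_four, Jmat, Kmat, Matrix.transpose_apply,
    Matrix.conjTranspose_apply, Matrix.diagonal_apply, Matrix.cons_val', Matrix.cons_val_zero,
    Matrix.cons_val_one, Matrix.cons_val_two, Matrix.cons_val_three, Matrix.head_cons,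
    Matrix.vecHead, Matrix.vecTail, Matrix.empty_val', Matrix.cons_val_fin_one,
    Function.comp_apply, Fin.succ_zero_eq_one, Fin.succ_one_eq_two, Matrix.of_apply,
    Fin.isValue, if_true, if_false, Fin.reduceEq, reduceIte, RingHom.map_zero, map_zero,
    star_zero, Complex.star_def, neg_neg, neg_zero, mul_zero, zero_mul, mul_one, one_mul, add_zero, zero_add,
    mul_neg, neg_mul, RingHomCompTriple.comp_apply] at eJ02 eJ03 eJ12 eJ13 eK00 eK11 eK22 eK02 eK12 eK03 eK13 eK23
  -- normalizer equations
  obtain ⟨a1, a2, a3, a4, a5, a6, hA⟩ := hN (bMat 0 0 0 1 0 0) ⟨0, 0, 0, 1, 0, 0, rfl⟩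
  obtain ⟨b1, b2, b3, b4, b5, b6, hBB⟩ := hN (bMat 0 0 0 0 0 1) ⟨0, 0, 0, 0, 0, 1, rfl⟩
  obtain ⟨c1, c2, c3, c4, c5, c6, hC⟩ := hN (bMat 0 0 1 0 0 0) ⟨0, 0, 1, 0, 0, 0, rfl⟩
  rw [hinv] at hA hBB hC
  have fA : ∀ i j, (g * bMat 0 0 0 1 0 0 * !![g 2 2, g 3 2, -(g 0 2), -(g 1 2);
      g 2 3, g 3 3, -(g 0 3), -(g 1 3);
      -(g 2 0), -(g 3 0), g 0 0, g 1 0;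
      -(g 2 1), -(g 3 1), g 0 1, g 1 1]) i j = bMat a1 a2 a3 a4 a5 a6 i j := fun i j => by rw [hA]
  have fB : ∀ i j, (g * bMat 0 0 0 0 0 1 * !![g 2 2, g 3 2, -(g 0 2), -(g 1 2);
      g 2 3, g 3 3, -(g 0 3), -(g 1 3);
      -(g 2 0), -(g 3 0), g 0 0, g 1 0;
      -(g 2 1), -(g 3 1), g 0 1, g 1 1]) i j = bMat b1 b2 b3 b4 b5 b6 i j := fun i j => by rw [hBB]
  have fC : ∀ i j, (g * bMat 0 0 1 0 0 0 * !![g 2 2, g 3 2, -(g 0 2), -(g 1 2);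
      g 2 3, g 3 3, -(g 0 3), -(g 1 3);
      -(g 2 0), -(g 3 0), g 0 0, g 1 0;
      -(g 2 1), -(g 3 1), g 0 1, g 1 1]) i j = bMat c1 c2 c3 c4 c5 c6 i j := fun i j => by rw [hC]
  have fA02 := fA 0 2; have fA13 := fA 1 3
  have fB02 := fB 0 2; have fB13 := fB 1 3
  have fC01 := fC 0 1
  simp [Matrix.mul_apply, Fin.sum_univ_four, bMat, Matrix.vecHead, Matrix.vecTail,
    -mul_eq_zero, -Matrix.cons_mul, -Matrix.vecMul_cons, -Matrix.cons_vecMul] at fA02 fA13 fB02 fB13 fC01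
  -- zero entries in the upper-right
  have h02 : g 0 2 = 0 := by
    have : g 0 2 * g 0 2 = 0 := by linear_combination fA02
    exact mul_self_eq_zero.mp this
  have h12 : g 1 2 = 0 := by
    have : g 1 2 * g 1 2 = 0 := by linear_combination fA13
    exact mul_self_eq_zero.mp this
  have h03 : g 0 3 = 0 := by
    have : g 0 3 * g 0 3 = 0 := by linear_combination fB02
    exact mul_self_eq_zero.mp this
  have h13 : g 1 3 = 0 := by
    have : g 1 3 * g 1 3 = 0 := by linear_combination fB13
    exact mul_self_eq_zero.mp this
  -- g 3 2 = 0
  have h32 : g 3 2 = 0 := by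
    by_cases hc : g 3 2 = 0
    · exact hc
    · exfalso
      have h01 : g 0 1 = 0 := by
        have : g 0 1 * g 3 2 = 0 := by linear_combination fC01 - g 3 1 * h02
        rcases mul_eq_zero.mp this with h | h
        · exact h
        · exact absurd h hc
      have h11 : g 1 1 = 0 := by
        have : g 1 1 * g 3 2 = 0 := by
          linear_combination eJ12 - g 2 2 * h01 + g 2 1 * h02 + g 3 1 * h12
        rcases mul_eq_zero.mp this with h | h
        · exact h
        · exact absurd h hc
      exact one_ne_zero (α := ℂ) (by
        linear_combination -eJ13 + g 2 3 * h01 - g 2 1 * h03 + g 3 3 * h11 - g 3 1 * h13)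
  have hc32 : (starRingEnd ℂ) (g 3 2) = 0 := by rw [h32]; simp
  have hc02 : (starRingEnd ℂ) (g 0 2) = 0 := by rw [h02]; simp
  have hc12 : (starRingEnd ℂ) (g 1 2) = 0 := by rw [h12]; simp
  -- a22 is a unit
  have hu22 : (starRingEnd ℂ) (g 2 2) * g 2 2 = 1 := by
    linear_combination eK22 - g 0 2 * hc02 + g 1 2 * hc12 + g 3 2 * hc32
  have h22ne : g 2 2 ≠ 0 := by
    intro h
    rw [h, mul_zero] at hu22
    exact zero_ne_one hu22
  have hc22ne : (starRingEnd ℂ) (g 2 2) ≠ 0 := by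
    intro h
    rw [h, zero_mul] at hu22
    exact zero_ne_one hu22
  -- g 0 1 = 0
  have h01 : g 0 1 = 0 := by
    have : g 0 1 * g 2 2 = 0 := by
      linear_combination eJ12 + g 2 1 * h02 + g 3 1 * h12 - g 1 1 * h32
    rcases mul_eq_zero.mp this with h | h
    · exact h
    · exact absurd h h22ne
  -- g 2 0 = 0 and g 2 1 = 0
  have h20 : g 2 0 = 0 := by
    have : (starRingEnd ℂ) (g 2 0) * g 2 2 = 0 := by
      linear_combination eK02 - (starRingEnd ℂ) (g 0 0) * h02 + (starRingEnd ℂ) (g 1 0) * h12 + (starRingEnd ℂ) (g 3 0) * h32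
    rcases mul_eq_zero.mp this with h | h
    · exact (star_eq_zero (R := ℂ)).mp h
    · exact absurd h h22ne
  have h21 : g 2 1 = 0 := by
    have : (starRingEnd ℂ) (g 2 1) * g 2 2 = 0 := by
      linear_combination eK12 - (starRingEnd ℂ) (g 0 1) * h02 + (starRingEnd ℂ) (g 1 1) * h12 + (starRingEnd ℂ) (g 3 1) * h32
    rcases mul_eq_zero.mp this with h | h
    · exact (star_eq_zero (R := ℂ)).mp h
    · exact absurd h h22ne
  have hc20 : (starRingEnd ℂ) (g 2 0) = 0 := by rw [h20]; simp
  have hc21 : (starRingEnd ℂ) (g 2 1) = 0 := by rw [h21]; simp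
  -- a11 a33 = 1
  have hu1133 : g 1 1 * g 3 3 = 1 := by
    linear_combination eJ13 - g 2 3 * h01 + g 2 1 * h03 + g 3 1 * h13
  have h33ne : g 3 3 ≠ 0 := by
    intro h
    rw [h, mul_zero] at hu1133
    exact zero_ne_one hu1133
  -- g 3 0 = 0, g 3 1 = 0
  have h30 : g 3 0 = 0 := by
    have : (starRingEnd ℂ) (g 3 0) * g 3 3 = 0 := by
      linear_combination -eK03 + (starRingEnd ℂ) (g 0 0) * h03 - (starRingEnd ℂ) (g 1 0) * h13 + g 2 3 * hc20
    rcases mul_eq_zero.mp this with h | h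
    · exact (star_eq_zero (R := ℂ)).mp h
    · exact absurd h h33ne
  have h31 : g 3 1 = 0 := by
    have : (starRingEnd ℂ) (g 3 1) * g 3 3 = 0 := by
      linear_combination -eK13 + (starRingEnd ℂ) (g 0 1) * h03 - (starRingEnd ℂ) (g 1 1) * h13 + g 2 3 * hc21
    rcases mul_eq_zero.mp this with h | h
    · exact (star_eq_zero (R := ℂ)).mp h
    · exact absurd h h33ne
  have hc30 : (starRingEnd ℂ) (g 3 0) = 0 := by rw [h30]; simp
  have hc31 : (starRingEnd ℂ) (g 3 1) = 0 := by rw [h31]; simp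
  -- g 2 3 = 0
  have h23 : g 2 3 = 0 := by
    have : g 2 3 * (starRingEnd ℂ) (g 2 2) = 0 := by
      linear_combination eK23 - g 0 3 * hc02 + g 1 3 * hc12 + g 3 3 * hc32
    rcases mul_eq_zero.mp this with h | h
    · exact h
    · exact absurd h hc22ne
  -- g 1 0 = 0
  have h10 : g 1 0 = 0 := by
    have : g 1 0 * g 3 3 = 0 := by
      linear_combination eJ03 + g 2 0 * h03 + g 3 0 * h13 - g 0 0 * h23
    rcases mul_eq_zero.mp this with h | h
    · exact h
    · exact absurd h h33ne
  have hc10 : (starRingEnd ℂ) (g 1 0) = 0 := by rw [h10]; simp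
  have hc01 : (starRingEnd ℂ) (g 0 1) = 0 := by rw [h01]; simp
  -- unit moduli
  have hu00 : (starRingEnd ℂ) (g 0 0) * g 0 0 = 1 := by
    linear_combination eK00 + g 1 0 * hc10 - g 2 0 * hc20 + g 3 0 * hc30
  have hu11 : (starRingEnd ℂ) (g 1 1) * g 1 1 = 1 := by
    linear_combination -eK11 + g 0 1 * hc01 + g 2 1 * hc21 - g 3 1 * hc31
  have h00ne : g 0 0 ≠ 0 := by
    intro h
    rw [h, mul_zero] at hu00
    exact zero_ne_one hu00
  -- diagonal relations
  have hu0022 : g 0 0 * g 2 2 = 1 := by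
    linear_combination eJ02 + g 2 0 * h02 + g 3 0 * h12 - g 1 0 * h32
  have h22 : g 2 2 = (starRingEnd ℂ) (g 0 0) := by
    linear_combination (starRingEnd ℂ) (g 0 0) * hu0022 - g 2 2 * hu00
  have h33 : g 3 3 = (starRingEnd ℂ) (g 1 1) := by
    linear_combination (starRingEnd ℂ) (g 1 1) * hu1133 - g 3 3 * hu11
  refine ⟨g 0 0, g 1 1, aux_abs_one _ hu00, aux_abs_one _ hu11, ?_⟩
  ext i j
  fin_cases i <;> fin_cases j <;>
    simp [Matrix.diagonal_apply, h01, h02, h03, h10, h12, h13, h20, h21, h23, h30, h31, h32,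
      h22, h33, Matrix.vecHead, Matrix.vecTail]

private lemma aux_diag_inv (x y : ℂ) (hx : ‖x‖ = 1) (hy : ‖y‖ = 1) :
    (Matrix.diagonal ![x, y, starRingEnd ℂ x, starRingEnd ℂ y])⁻¹
      = Matrix.diagonal ![starRingEnd ℂ x, starRingEnd ℂ y, x, y] := by
  have hxx := aux_conj_mul x hx
  have hyy := aux_conj_mul y hy
  apply Matrix.inv_eq_left_inv
  rw [Matrix.diagonal_mul_diagonal]
  ext i j
  fin_cases i <;> fin_cases j <;>
    simp [Matrix.diagonal_apply, Matrix.one_apply, Matrix.vecHead, Matrix.vecTail] <;>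
    first
      | ring1
      | linear_combination hxx
      | linear_combination hyy
  
private lemma aux_diag_norm (x y : ℂ) (hx : ‖x‖ = 1) (hy : ‖y‖ = 1) :
    ∀ M ∈ bSet, (Matrix.diagonal ![x, y, starRingEnd ℂ x, starRingEnd ℂ y]) * M *
      (Matrix.diagonal ![x, y, starRingEnd ℂ x, starRingEnd ℂ y])⁻¹ ∈ bSet := by
  have hxx := aux_conj_mul x hx
  have hyy := aux_conj_mul y hy
  rintro M ⟨z₁, z₂, w₁, w₂, w₃, w₄, rfl⟩
  rw [aux_diag_inv x y hx hy]
  refine ⟨z₁, z₂, starRingEnd ℂ x * w₁ * y, starRingEnd ℂ x * w₂ * starRingEnd ℂ x,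
    starRingEnd ℂ x * w₃ * starRingEnd ℂ y, starRingEnd ℂ y * w₄ * starRingEnd ℂ y, ?_⟩
  ext i j
  fin_cases i <;> fin_cases j <;>
    simp [Matrix.mul_apply, Fin.sum_univ_four, bMat, Matrix.diagonal_apply,
      Matrix.vecHead, Matrix.vecTail] <;>
    first
      | ring1
      | linear_combination z₁ * hxx
      | linear_combination (-z₁) * hxx
      | linear_combination z₂ * hyy
      | linear_combination (-z₂) * hyy
      | linear_combination (z₁ * x) * hxx
      | linear_combination (-z₁ * x) * hxx
      | linear_combination (z₂ * y) * hyy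
      | linear_combination (-z₂ * y) * hyy

private lemma aux_diag_sp11 (x y : ℂ) (hx : ‖x‖ = 1) (hy : ‖y‖ = 1) :
    (Matrix.diagonal ![x, y, starRingEnd ℂ x, starRingEnd ℂ y]) ∈ Sp11Set := by
  have hxx := aux_conj_mul x hx
  have hyy := aux_conj_mul y hy
  constructor
  · ext i j
    fin_cases i <;> fin_cases j <;>
      simp [Matrix.mul_apply, Fin.sum_univ_four, Jmat, Matrix.diagonal_apply,
        Matrix.transpose_apply, Matrix.vecHead, Matrix.vecTail] <;>
      first
        | ring1
        | linear_combination hxx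
        | linear_combination -hxx
        | linear_combination hyy
        | linear_combination -hyy
  · ext i j
    fin_cases i <;> fin_cases j <;>
      simp [Matrix.mul_apply, Fin.sum_univ_four, Kmat, Matrix.diagonal_apply,
        Matrix.conjTranspose_apply, Complex.star_def, Matrix.vecHead, Matrix.vecTail] <;>
      first
        | ring1
        | linear_combination hxx
        | linear_combination -hxx
        | linear_combination hyy
        | linear_combination -hyy

private lemma aux_s_mem_sp11 (g : M4) (hg : g ∈ sSet) : g ∈ Sp11Set := by
  obtain ⟨x, Y, hx, ⟨hY1, hY2⟩, rfl⟩ := hg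
  have hxx := aux_conj_mul x hx
  have hxinv : x⁻¹ = starRingEnd ℂ x := inv_eq_of_mul_eq_one_right hxx
  have eU : ∀ i j, (Yᴴ * Y) i j = (1 : M2) i j := fun i j => by rw [hY1]
  have eD : ∀ i j, (Yᵀ * J2 * Y) i j = J2 i j := fun i j => by rw [hY2]
  have u00 := eU 0 0; have u01 := eU 0 1; have u10 := eU 1 0; have u11 := eU 1 1
  have d01 := eD 0 1
  simp only [Matrix.mul_apply, Fin.sum_univ_two, J2, Matrix.transpose_apply,
    Matrix.conjTranspose_apply, Complex.star_def, Matrix.one_apply, Matrix.cons_val',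
    Matrix.cons_val_zero, Matrix.cons_val_one, Matrix.head_cons, Matrix.vecHead, Matrix.vecTail,
    Matrix.empty_val', Matrix.cons_val_fin_one, Matrix.of_apply, Fin.isValue, if_true, if_false,
    Fin.reduceEq, reduceIte, one_ne_zero, neg_neg, neg_zero, mul_zero, zero_mul, mul_one, one_mul,
    add_zero, zero_add, mul_neg, neg_mul] at u00 u01 u10 u11 d01
  constructor
  · ext i j
    simp only [sMat, hxinv]
    fin_cases i <;> fin_cases j <;>
      simp [Matrix.mul_apply, Fin.sum_univ_four, Jmat, Matrix.transpose_apply,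
        Matrix.vecHead, Matrix.vecTail] <;>
      first
        | ring1
        | linear_combination hxx
        | linear_combination -hxx
        | linear_combination d01
        | linear_combination -d01
  · ext i j
    simp only [sMat, hxinv]
    fin_cases i <;> fin_cases j <;>
      simp [Matrix.mul_apply, Fin.sum_univ_four, Kmat, Matrix.diagonal_apply,
        Matrix.conjTranspose_apply, Complex.star_def, Matrix.vecHead, Matrix.vecTail] <;>
      first
        | ring1
        | linear_combination hxx
        | linear_combination -hxx
        | linear_combination u00
        | linear_combination -u00
        | linear_combination u01
        | linear_combination -u01
        | linear_combination u10
        | linear_combination -u10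
        | linear_combination u11
        | linear_combination -u11

private lemma aux_diag_mem_s (x y : ℂ) (hx : ‖x‖ = 1) (hy : ‖y‖ = 1) :
    (Matrix.diagonal ![x, y, starRingEnd ℂ x, starRingEnd ℂ y]) ∈ sSet := by
  have hxx := aux_conj_mul x hx
  have hyy := aux_conj_mul y hy
  have hxinv : x⁻¹ = starRingEnd ℂ x := inv_eq_of_mul_eq_one_right hxx
  refine ⟨x, !![y, 0; 0, starRingEnd ℂ y], hx, ⟨?_, ?_⟩, ?_⟩
  · ext i j
    fin_cases i <;> fin_cases j <;>
      simp [Matrix.mul_apply, Fin.sum_univ_two, Matrix.conjTranspose_apply, Complex.star_def,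
        Matrix.one_apply, Matrix.vecHead, Matrix.vecTail] <;>
      first
        | ring1
        | linear_combination hyy
        | linear_combination -hyy
  · ext i j
    fin_cases i <;> fin_cases j <;>
      simp [Matrix.mul_apply, Fin.sum_univ_two, J2, Matrix.transpose_apply,
        Matrix.vecHead, Matrix.vecTail] <;>
      first
        | ring1
        | linear_combination hyy
        | linear_combination -hyy
  · ext i j
    simp only [sMat, hxinv]
    fin_cases i <;> fin_cases j <;>
      simp [Matrix.diagonal_apply, Matrix.vecHead, Matrix.vecTail]

theorem Sp11_inter_normalizer :
    {g : M4 | g ∈ Sp11Set ∧ ∀ M ∈ bSet, g * M * g⁻¹ ∈ bSet}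
      = {g : M4 | ∃ x y : ℂ, ‖x‖ = 1 ∧ ‖y‖ = 1 ∧
          g = Matrix.diagonal ![x, y, starRingEnd ℂ x, starRingEnd ℂ y]} ∧
    {g : M4 | g ∈ Sp11Set ∧ ∀ M ∈ bSet, g * M * g⁻¹ ∈ bSet}
      = {g : M4 | g ∈ sSet ∧ ∀ M ∈ bSet, g * M * g⁻¹ ∈ bSet} := by
  have part1 : {g : M4 | g ∈ Sp11Set ∧ ∀ M ∈ bSet, g * M * g⁻¹ ∈ bSet}
      = {g : M4 | ∃ x y : ℂ, ‖x‖ = 1 ∧ ‖y‖ = 1 ∧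
          g = Matrix.diagonal ![x, y, starRingEnd ℂ x, starRingEnd ℂ y]} := by
    ext g
    simp only [Set.mem_setOf_eq]
    constructor
    · rintro ⟨⟨hJ, hK⟩, hN⟩
      exact aux_forward g hJ hK hN
    · rintro ⟨x, y, hx, hy, rfl⟩
      exact ⟨aux_diag_sp11 x y hx hy, aux_diag_norm x y hx hy⟩
  refine ⟨part1, ?_⟩
  ext g
  simp only [Set.mem_setOf_eq]
  constructor
  · intro hg
    have hD : g ∈ {g : M4 | ∃ x y : ℂ, ‖x‖ = 1 ∧ ‖y‖ = 1 ∧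
        g = Matrix.diagonal ![x, y, starRingEnd ℂ x, starRingEnd ℂ y]} := part1 ▸ hg
    obtain ⟨x, y, hx, hy, hgeq⟩ := hD
    subst hgeq
    exact ⟨aux_diag_mem_s x y hx hy, hg.2⟩
  · rintro ⟨hs, hn⟩
    exact ⟨aux_s_mem_sp11 g hs, hn⟩
end
end
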